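/- arXiv:math/0203183 — 2 statements merged into one kernel-verified Lean document; each statement's English description precedes it below -/
import Mathlib

section
/- Let G be a group, n ≥ 2, let θ : G → S_n be a surjective group homomorphism and δ : G → ℤ a group homomorphism, and suppose G is generated by a set Γ such that for every γ ∈ Γ, θ(γ) is a transposition and δ(γ) = 1. Then the image of the homomorphism g ↦ (θ(g), δ(g)) from G to S_n × ℤ is exactly the subgroup {(τ, m) ∈ S_n × ℤ : sgn(τ) = (−1)^m}, and this subgroup has index 2 in S_n × ℤ. -/
private lemma neg_one_zpow_two : (-1 : ℤˣ) ^ (2 : ℤ) = 1 := by decide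

private lemma neg_one_zpow_iff (k : ℤ) : (-1 : ℤˣ) ^ k = 1 ↔ Even k := by
  constructor
  · intro h
    by_contra he
    rw [Int.not_even_iff_odd] at he
    obtain ⟨j, rfl⟩ := he
    rw [zpow_add, zpow_mul, neg_one_zpow_two] at h
    norm_num at h
  · rintro ⟨j, rfl⟩
    rw [show j + j = 2 * j by ring, zpow_mul, neg_one_zpow_two, one_zpow]

/-- Let `G` be a group, `n ≥ 2`, `θ : G → S_n` a surjective group
homomorphism and `δ : G → ℤ` a group homomorphism, and suppose `G` is generated by a set
`Γ` such that for every `γ ∈ Γ`, `θ(γ)` is a transposition and `δ(γ) = 1`. Then the image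
of `g ↦ (θ(g), δ(g))` in `S_n × ℤ` is exactly the subgroup
`{(τ, m) : sgn(τ) = (−1)^m}`, and this subgroup has index 2 in `S_n × ℤ`. -/
theorem range_theta_delta (G : Type*) [Group G] (n : ℕ) (hn : 2 ≤ n)
    (θ : G →* Equiv.Perm (Fin n)) (hθ : Function.Surjective θ)
    (δ : G →* Multiplicative ℤ)
    (Γ : Set G) (hgen : Subgroup.closure Γ = ⊤)
    (hΓ : ∀ γ ∈ Γ, (θ γ).IsSwap ∧ δ γ = Multiplicative.ofAdd 1) :
    ((θ.prod δ).range : Set (Equiv.Perm (Fin n) × Multiplicative ℤ)) =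
      {p | Equiv.Perm.sign p.1 = (-1 : ℤˣ) ^ (Multiplicative.toAdd p.2)} ∧
    (θ.prod δ).range.index = 2 := by
  -- the comparison homomorphism
  set φ : Equiv.Perm (Fin n) × Multiplicative ℤ →* ℤˣ :=
    (Equiv.Perm.sign.comp (MonoidHom.fst _ _)) *
      ((zpowersHom ℤˣ (-1)).comp (MonoidHom.snd _ _)) with hφ
  have φ_apply : ∀ p : Equiv.Perm (Fin n) × Multiplicative ℤ,
      φ p = Equiv.Perm.sign p.1 * (-1 : ℤˣ) ^ (Multiplicative.toAdd p.2) := fun p => rfl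
  have hker : ∀ p : Equiv.Perm (Fin n) × Multiplicative ℤ,
      φ p = 1 ↔ Equiv.Perm.sign p.1 = (-1 : ℤˣ) ^ (Multiplicative.toAdd p.2) := by
    intro p
    rw [φ_apply]
    rcases Int.units_eq_one_or (Equiv.Perm.sign p.1) with h | h <;>
      rcases Int.units_eq_one_or ((-1 : ℤˣ) ^ (Multiplicative.toAdd p.2)) with h2 | h2 <;>
        rw [h, h2] <;> simp
  -- the composite G →* ℤˣ is trivial
  have hψ : ∀ g : G, φ (θ.prod δ g) = 1 := by
    have hle : Subgroup.closure Γ ≤ (φ.comp (θ.prod δ)).ker := by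
      rw [Subgroup.closure_le]
      intro γ hγ
      obtain ⟨hswap, hδ⟩ := hΓ γ hγ
      obtain ⟨a, b, hab, hs⟩ := hswap
      show (φ.comp (θ.prod δ)) γ = 1
      rw [MonoidHom.comp_apply, φ_apply]
      simp only [MonoidHom.prod_apply]
      rw [hδ, hs, Equiv.Perm.sign_swap hab]
      decide
    rw [hgen, top_le_iff] at hle
    intro g
    have hg : g ∈ (φ.comp (θ.prod δ)).ker := by rw [hle]; trivial
    exact MonoidHom.mem_ker.mp hg
  -- Γ is nonempty
  have hne : Γ.Nonempty := by
    rw [Set.nonempty_iff_ne_empty]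
    rintro rfl
    rw [Subgroup.closure_empty] at hgen
    have h01 : (⟨0, by omega⟩ : Fin n) ≠ ⟨1, by omega⟩ := by
      simp [Fin.ext_iff]
    obtain ⟨g, hg⟩ := hθ (Equiv.swap ⟨0, by omega⟩ ⟨1, by omega⟩)
    have hg1 : g = 1 := Subgroup.mem_bot.mp (hgen ▸ Subgroup.mem_top g)
    rw [hg1, map_one] at hg
    have := Equiv.ext_iff.mp hg ⟨0, by omega⟩
    rw [Equiv.swap_apply_left] at this
    simp only [Equiv.Perm.one_apply] at this
    exact h01 this
  obtain ⟨γ₀, hγ₀⟩ := hne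
  obtain ⟨hswap₀, hδ₀⟩ := hΓ γ₀ hγ₀
  have hsq : θ γ₀ * θ γ₀ = 1 := by
    obtain ⟨a, b, hab, hs⟩ := hswap₀
    rw [hs]; exact Equiv.swap_mul_self a b
  -- the set equality
  have hset : ((θ.prod δ).range : Set (Equiv.Perm (Fin n) × Multiplicative ℤ)) =
      {p | Equiv.Perm.sign p.1 = (-1 : ℤˣ) ^ (Multiplicative.toAdd p.2)} := by
    ext p
    constructor
    · rintro ⟨g, rfl⟩
      exact (hker _).mp (hψ g)
    · intro hp
      obtain ⟨g, hg⟩ := hθ p.1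
      set d : ℤ := Multiplicative.toAdd (δ g) with hd
      set m : ℤ := Multiplicative.toAdd p.2 with hm
      have h1 : Equiv.Perm.sign (θ g) = (-1 : ℤˣ) ^ d := (hker _).mp (hψ g)
      have h2 : (-1 : ℤˣ) ^ d = (-1 : ℤˣ) ^ m := by
        rw [← h1, hg]; exact hp
      have heven : Even (m - d) := by
        apply (neg_one_zpow_iff _).mp
        rw [zpow_sub, h2, mul_inv_cancel]
      refine ⟨g * γ₀ ^ (m - d), ?_⟩
      have hθ' : θ (g * γ₀ ^ (m - d)) = p.1 := by
        rw [map_mul, map_zpow, hg]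
        obtain ⟨j, hj⟩ := heven
        rw [hj, show j + j = 2 * j by ring, zpow_mul,
          show (θ γ₀) ^ (2 : ℤ) = θ γ₀ * θ γ₀ from rfl, hsq, one_zpow, mul_one]
      have hδ' : δ (g * γ₀ ^ (m - d)) = p.2 := by
        rw [map_mul, map_zpow, hδ₀]
        apply Multiplicative.toAdd.injective
        simp only [toAdd_mul, toAdd_zpow, toAdd_ofAdd, smul_eq_mul, mul_one, ← hd, ← hm]
        ring
      exact Prod.ext hθ' hδ'
  refine ⟨hset, ?_⟩
  -- the range equals the kernel of φ
  have hrange : (θ.prod δ).range = φ.ker := by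
    ext p
    rw [SetLike.mem_coe.symm, hset, MonoidHom.mem_ker, hker]
    rfl
  rw [hrange, Subgroup.index_ker]
  -- φ is surjective
  have hsurj : Function.Surjective φ := by
    intro u
    rcases Int.units_eq_one_or u with rfl | rfl
    · exact ⟨1, by rw [φ_apply]; simp⟩
    · refine ⟨(1, Multiplicative.ofAdd 1), ?_⟩
      rw [φ_apply]
      simp
  rw [MonoidHom.range_eq_top.mpr hsurj]
  rw [Subgroup.card_top]
  simp [Nat.card_eq_fintype_card]
end

section
/- Let p, q ≥ 2 be integers and let Λ be the subgroup of ℤ² generated by (q, 3q−2) and (p, 3p−2). If p and q are both even, then ℤ²/Λ is isomorphic to (ℤ/2ℤ) × (ℤ/(p−q)ℤ); if p or q is odd, then ℤ²/Λ is isomorphic to ℤ/(2(p−q))ℤ. -/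
set_option maxHeartbeats 1000000

private def Lhom (q : ℤ) : ℤ × ℤ →+ ℤ :=
  AddMonoidHom.mk' (fun v => (2 - 3 * q) * v.1 + q * v.2)
    (by intro a b; simp only [Prod.fst_add, Prod.snd_add]; ring)

private lemma Lhom_apply (q : ℤ) (v : ℤ × ℤ) : Lhom q v = (2 - 3 * q) * v.1 + q * v.2 := rfl

private def Ahom : ℤ × ℤ →+ ℤ :=
  AddMonoidHom.mk' (fun v => v.2 - 3 * v.1)
    (by intro a b; simp only [Prod.fst_add, Prod.snd_add]; ring)

private lemma Ahom_apply (v : ℤ × ℤ) : Ahom v = v.2 - 3 * v.1 := rfl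

private def Bhom (c : ℤ) : ℤ × ℤ →+ ℤ :=
  AddMonoidHom.mk' (fun v => v.1 - c * (3 * v.1 - v.2))
    (by intro a b; simp only [Prod.fst_add, Prod.snd_add]; ring)

private lemma Bhom_apply (c : ℤ) (v : ℤ × ℤ) : Bhom c v = v.1 - c * (3 * v.1 - v.2) := rfl

private lemma zmultiples_neg' (a : ℤ) :
    AddSubgroup.zmultiples (-a) = AddSubgroup.zmultiples a := by
  ext x
  simp only [AddSubgroup.mem_zmultiples_iff, smul_eq_mul]
  constructor
  · rintro ⟨k, rfl⟩; exact ⟨-k, by ring⟩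
  · rintro ⟨k, rfl⟩; exact ⟨-k, by ring⟩

/-- Odd case helper: if `q` is odd. -/
private lemma odd_case (p q : ℤ) (hq : Odd q) :
    Nonempty (((ℤ × ℤ) ⧸ AddSubgroup.closure ({(q, 3 * q - 2), (p, 3 * p - 2)} : Set (ℤ × ℤ))) ≃+
      (ℤ ⧸ AddSubgroup.zmultiples (2 * (p - q)))) := by
  obtain ⟨m, hm⟩ := hq
  subst hm
  set q : ℤ := 2 * m + 1 with hqdef
  let φ : ℤ × ℤ →+ ℤ ⧸ AddSubgroup.zmultiples (2 * (p - q)) :=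
    (QuotientAddGroup.mk' (AddSubgroup.zmultiples (2 * (p - q)))).comp (Lhom q)
  have hφv : ∀ v : ℤ × ℤ, φ v = QuotientAddGroup.mk' _ (Lhom q v) := fun v => rfl
  have hker : AddSubgroup.closure ({(q, 3 * q - 2), (p, 3 * p - 2)} : Set (ℤ × ℤ)) = φ.ker := by
    apply le_antisymm
    · rw [AddSubgroup.closure_le]
      rintro v hv
      simp only [Set.mem_insert_iff, Set.mem_singleton_iff] at hv
      rcases hv with rfl | rfl
      · show φ _ = 0
        rw [hφv]
        refine (QuotientAddGroup.eq_zero_iff _).mpr ?_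
        rw [Lhom_apply, AddSubgroup.mem_zmultiples_iff]
        exact ⟨0, by simp only [smul_eq_mul, zero_mul]; ring⟩
      · show φ _ = 0
        rw [hφv]
        refine (QuotientAddGroup.eq_zero_iff _).mpr ?_
        rw [Lhom_apply, AddSubgroup.mem_zmultiples_iff]
        exact ⟨1, by simp only [smul_eq_mul, one_mul]; ring⟩
    · rintro ⟨x, y⟩ hv
      have h0 : φ (x, y) = 0 := hv
      rw [hφv] at h0
      have h1 : Lhom q (x, y) ∈ AddSubgroup.zmultiples (2 * (p - q)) :=
        (QuotientAddGroup.eq_zero_iff _).mp h0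
      rw [AddSubgroup.mem_zmultiples_iff] at h1
      obtain ⟨k, hk⟩ := h1
      rw [Lhom_apply] at hk
      simp only [smul_eq_mul] at hk
      -- hk : k * (2 * (p - q)) = (2 - 3*q) * x + q * y
      have hs : ∃ s : ℤ, s = x - k * (p - q) - m * (3 * x - y) := ⟨_, rfl⟩
      obtain ⟨s, hs⟩ := hs
      have h2s : 3 * x - y = 2 * s := by
        rw [hqdef] at hk
        linear_combination hk - 2 * hs
      have hxk2 : 2 * (x - q * s) = 2 * (k * (p - q)) := by
        linear_combination q * h2s - hk
      have hxk : x - q * s = k * (p - q) := by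
        have h2 : (2 : ℤ) ≠ 0 := by norm_num
        exact mul_left_cancel₀ h2 hxk2
      have hmem1 : ((q, 3 * q - 2) : ℤ × ℤ) ∈
          AddSubgroup.closure ({(q, 3 * q - 2), (p, 3 * p - 2)} : Set (ℤ × ℤ)) :=
        AddSubgroup.subset_closure (by simp)
      have hmem2 : ((p, 3 * p - 2) : ℤ × ℤ) ∈
          AddSubgroup.closure ({(q, 3 * q - 2), (p, 3 * p - 2)} : Set (ℤ × ℤ)) :=
        AddSubgroup.subset_closure (by simp)
      have hxy : ((x, y) : ℤ × ℤ) = (s - k) • (q, 3 * q - 2) + k • (p, 3 * p - 2) := by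
        simp only [Prod.smul_mk, smul_eq_mul, Prod.mk_add_mk, Prod.mk.injEq]
        constructor
        · linear_combination hxk
        · linear_combination 3 * hxk - h2s
      rw [hxy]
      exact add_mem (zsmul_mem hmem1 _) (zsmul_mem hmem2 _)
  have hsurj : Function.Surjective φ := by
    intro c
    obtain ⟨n, rfl⟩ := QuotientAddGroup.mk'_surjective _ c
    refine ⟨(n * (m + 1), n * (3 * m + 2)), ?_⟩
    rw [hφv]
    congr 1
    rw [Lhom_apply]
    show (2 - 3 * (2 * m + 1)) * (n * (m + 1)) + (2 * m + 1) * (n * (3 * m + 2)) = n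
    ring
  exact ⟨(QuotientAddGroup.quotientAddEquivOfEq hker).trans
    (QuotientAddGroup.quotientKerEquivOfSurjective φ hsurj)⟩

private lemma even_case (p q : ℤ) (hq : Even q) :
    Nonempty (((ℤ × ℤ) ⧸ AddSubgroup.closure ({(q, 3 * q - 2), (p, 3 * p - 2)} : Set (ℤ × ℤ))) ≃+
      ((ℤ ⧸ AddSubgroup.zmultiples (2 : ℤ)) × (ℤ ⧸ AddSubgroup.zmultiples (p - q)))) := by
  obtain ⟨c, hc⟩ := hq
  subst hc
  set q : ℤ := c + c with hqdef
  let ψ : ℤ × ℤ →+ (ℤ ⧸ AddSubgroup.zmultiples (2 : ℤ)) × (ℤ ⧸ AddSubgroup.zmultiples (p - q)) :=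
    ((QuotientAddGroup.mk' (AddSubgroup.zmultiples (2 : ℤ))).comp Ahom).prod
      ((QuotientAddGroup.mk' (AddSubgroup.zmultiples (p - q))).comp (Bhom c))
  have hψv : ∀ v : ℤ × ℤ,
      ψ v = (QuotientAddGroup.mk' _ (Ahom v), QuotientAddGroup.mk' _ (Bhom c v)) := fun v => rfl
  have hker : AddSubgroup.closure ({(q, 3 * q - 2), (p, 3 * p - 2)} : Set (ℤ × ℤ)) = ψ.ker := by
    apply le_antisymm
    · rw [AddSubgroup.closure_le]
      rintro v hv
      simp only [Set.mem_insert_iff, Set.mem_singleton_iff] at hv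
      rcases hv with rfl | rfl
      · show ψ _ = 0
        rw [hψv, Prod.mk_eq_zero]
        constructor
        · refine (QuotientAddGroup.eq_zero_iff _).mpr ?_
          rw [Ahom_apply, AddSubgroup.mem_zmultiples_iff]
          exact ⟨-1, by simp only [smul_eq_mul]; ring⟩
        · refine (QuotientAddGroup.eq_zero_iff _).mpr ?_
          rw [Bhom_apply, AddSubgroup.mem_zmultiples_iff]
          refine ⟨0, by simp only [smul_eq_mul, zero_mul]; rw [hqdef]; ring⟩
      · show ψ _ = 0
        rw [hψv, Prod.mk_eq_zero]
        constructor
        · refine (QuotientAddGroup.eq_zero_iff _).mpr ?_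
          rw [Ahom_apply, AddSubgroup.mem_zmultiples_iff]
          exact ⟨-1, by simp only [smul_eq_mul]; ring⟩
        · refine (QuotientAddGroup.eq_zero_iff _).mpr ?_
          rw [Bhom_apply, AddSubgroup.mem_zmultiples_iff]
          refine ⟨1, by simp only [smul_eq_mul, one_mul]; rw [hqdef]; ring⟩
    · rintro ⟨x, y⟩ hv
      have h0 : ψ (x, y) = 0 := hv
      rw [hψv, Prod.mk_eq_zero] at h0
      obtain ⟨h1, h2⟩ := h0
      have h1' := (QuotientAddGroup.eq_zero_iff _).mp h1
      have h2' := (QuotientAddGroup.eq_zero_iff _).mp h2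
      rw [Ahom_apply, AddSubgroup.mem_zmultiples_iff] at h1'
      rw [Bhom_apply, AddSubgroup.mem_zmultiples_iff] at h2'
      obtain ⟨a, ha⟩ := h1'
      obtain ⟨k, hk⟩ := h2'
      simp only [smul_eq_mul] at ha hk
      -- ha : a * 2 = y - 3 * x; hk : k * (p - q) = x - c * (3 * x - y)
      have h2s : 3 * x - y = 2 * (-a) := by linear_combination ha
      have hxk : x - q * (-a) = k * (p - q) := by
        rw [hqdef]
        linear_combination c * h2s - hk
      have hmem1 : ((q, 3 * q - 2) : ℤ × ℤ) ∈
          AddSubgroup.closure ({(q, 3 * q - 2), (p, 3 * p - 2)} : Set (ℤ × ℤ)) :=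
        AddSubgroup.subset_closure (by simp)
      have hmem2 : ((p, 3 * p - 2) : ℤ × ℤ) ∈
          AddSubgroup.closure ({(q, 3 * q - 2), (p, 3 * p - 2)} : Set (ℤ × ℤ)) :=
        AddSubgroup.subset_closure (by simp)
      have hxy : ((x, y) : ℤ × ℤ) = (-a - k) • (q, 3 * q - 2) + k • (p, 3 * p - 2) := by
        simp only [Prod.smul_mk, smul_eq_mul, Prod.mk_add_mk, Prod.mk.injEq]
        constructor
        · linear_combination hxk
        · linear_combination 3 * hxk - h2s
      rw [hxy]
      exact add_mem (zsmul_mem hmem1 _) (zsmul_mem hmem2 _)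
  have hsurj : Function.Surjective ψ := by
    rintro ⟨u, v⟩
    obtain ⟨a, rfl⟩ := QuotientAddGroup.mk'_surjective _ u
    obtain ⟨b, rfl⟩ := QuotientAddGroup.mk'_surjective _ v
    refine ⟨(-c * a + b, (1 - 3 * c) * a + 3 * b), ?_⟩
    rw [hψv]
    have e1 : Ahom ((-c * a + b : ℤ), ((1 - 3 * c) * a + 3 * b : ℤ)) = a := by
      rw [Ahom_apply]; dsimp only; ring
    have e2 : Bhom c ((-c * a + b : ℤ), ((1 - 3 * c) * a + 3 * b : ℤ)) = b := by
      rw [Bhom_apply]; dsimp only; ring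
    rw [e1, e2]
  exact ⟨(QuotientAddGroup.quotientAddEquivOfEq hker).trans
    (QuotientAddGroup.quotientKerEquivOfSurjective ψ hsurj)⟩

/-- Let `p, q ≥ 2` be integers and let `Λ ≤ ℤ²` be generated by
`(q, 3q−2)` and `(p, 3p−2)`. If `p` and `q` are both even, then `ℤ²/Λ ≅ (ℤ/2ℤ) × (ℤ/(p−q)ℤ)`;
if `p` or `q` is odd, then `ℤ²/Λ ≅ ℤ/(2(p−q))ℤ`. -/
theorem quotient_lambda_P1xP1 (p q : ℤ) (hp : 2 ≤ p) (hq : 2 ≤ q) :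
    (Even p ∧ Even q →
      Nonempty (((ℤ × ℤ) ⧸ AddSubgroup.closure ({(q, 3 * q - 2), (p, 3 * p - 2)} : Set (ℤ × ℤ))) ≃+
        ((ℤ ⧸ AddSubgroup.zmultiples (2 : ℤ)) × (ℤ ⧸ AddSubgroup.zmultiples (p - q))))) ∧
    (Odd p ∨ Odd q →
      Nonempty (((ℤ × ℤ) ⧸ AddSubgroup.closure ({(q, 3 * q - 2), (p, 3 * p - 2)} : Set (ℤ × ℤ))) ≃+
        (ℤ ⧸ AddSubgroup.zmultiples (2 * (p - q))))) := by
  constructor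
  · rintro ⟨-, hqe⟩
    exact even_case p q hqe
  · rintro (hpo | hqo)
    · have h : AddSubgroup.zmultiples (2 * (p - q)) = AddSubgroup.zmultiples (2 * (q - p)) := by
        rw [show (2 * (q - p) : ℤ) = -(2 * (p - q)) by ring, zmultiples_neg']
      rw [Set.pair_comm, h]
      exact odd_case q p hpo
    · exact odd_case p q hqo
end
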